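/- arXiv:math/0308177 — 5 statements merged into one kernel-verified Lean document; each statement's English description precedes it below -/
import Mathlib

section
/- For a continuous t-norm ⋆ on [0,1] with residuum →, the lattice join is term-definable: for all x, y in [0,1], max(x, y) = min(((x → y) → y), ((y → x) → x)). -/
def unitI : Set ℝ := Set.Icc 0 1

structure IsTNorm (f : ℝ → ℝ → ℝ) : Prop where
  maps : ∀ x ∈ unitI, ∀ y ∈ unitI, f x y ∈ unitI
  comm : ∀ x ∈ unitI, ∀ y ∈ unitI, f x y = f y x
  assoc : ∀ x ∈ unitI, ∀ y ∈ unitI, ∀ z ∈ unitI, f (f x y) z = f x (f y z)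
  one_mul : ∀ x ∈ unitI, f x 1 = x
  mono : ∀ x ∈ unitI, ∀ y ∈ unitI, ∀ z ∈ unitI, x ≤ y → f z x ≤ f z y
  cont : ContinuousOn (fun p : ℝ × ℝ => f p.1 p.2) (unitI ×ˢ unitI)

/-- The residuum of a t-norm: `residuum f y z` is "y → z", i.e. `sup {x ∈ [0,1] : f x y ≤ z}`. -/
noncomputable def residuum (f : ℝ → ℝ → ℝ) (y z : ℝ) : ℝ :=
  sSup {x | x ∈ unitI ∧ f x y ≤ z}

lemma one_mem : (1:ℝ) ∈ unitI := ⟨zero_le_one, le_refl 1⟩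

lemma residuum_one (f : ℝ → ℝ → ℝ) (hf : IsTNorm f) {y : ℝ} (hy : y ∈ unitI) :
    residuum f 1 y = y := by
  have hset : {x | x ∈ unitI ∧ f x 1 ≤ y} = Set.Icc 0 y := by
    ext a
    constructor
    · rintro ⟨ha, h⟩
      exact ⟨ha.1, by rwa [hf.one_mul a ha] at h⟩
    · rintro ⟨h0, h1⟩
      have ha : a ∈ unitI := ⟨h0, h1.trans hy.2⟩
      exact ⟨ha, by rwa [hf.one_mul a ha]⟩
  rw [residuum, hset, csSup_Icc hy.1]

lemma residuum_eq_one (f : ℝ → ℝ → ℝ) (hf : IsTNorm f) {x y : ℝ}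
    (hx : x ∈ unitI) (hy : y ∈ unitI) (hxy : x ≤ y) :
    residuum f x y = 1 := by
  have hset : {a | a ∈ unitI ∧ f a x ≤ y} = unitI := by
    ext a
    constructor
    · exact fun h => h.1
    · intro ha
      refine ⟨ha, ?_⟩
      calc f a x = f x a := hf.comm a ha x hx
        _ ≤ f x 1 := hf.mono a ha 1 one_mem x hx ha.2
        _ = x := hf.one_mul x hx
        _ ≤ y := hxy
  rw [residuum, hset, unitI, csSup_Icc zero_le_one]

lemma residuum_mem (f : ℝ → ℝ → ℝ) (hf : IsTNorm f) {x y : ℝ}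
    (hx : x ∈ unitI) (hy : y ∈ unitI) :
    residuum f y x ∈ {a | a ∈ unitI ∧ f a y ≤ x} := by
  set S := {a | a ∈ unitI ∧ f a y ≤ x} with hS
  have hzero : (0:ℝ) ∈ S := by
    refine ⟨⟨le_refl 0, zero_le_one⟩, ?_⟩
    have h1 : f 0 y ≤ f 0 1 := hf.mono y hy 1 one_mem 0 ⟨le_refl 0, zero_le_one⟩ hy.2
    rw [hf.one_mul 0 ⟨le_refl 0, zero_le_one⟩] at h1
    calc f 0 y ≤ 0 := h1
      _ ≤ x := hx.1
  have hclosed : IsClosed S := by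
    have hcont : ContinuousOn (fun a => f a y) unitI := by
      have := hf.cont.comp (f := fun a : ℝ => (a, y)) (Continuous.continuousOn (by continuity))
        (fun a ha => Set.mk_mem_prod ha hy)
      exact this
    have : S = unitI ∩ (fun a => f a y) ⁻¹' Set.Iic x := by
      ext a; exact Iff.rfl
    rw [this]
    exact hcont.preimage_isClosed_of_isClosed isClosed_Icc isClosed_Iic
  have hcompact : IsCompact S :=
    (isCompact_Icc (a := (0:ℝ)) (b := 1)).of_isClosed_subset hclosed (fun a ha => ha.1)
  exact hcompact.sSup_mem ⟨0, hzero⟩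

lemma key_le (f : ℝ → ℝ → ℝ) (hf : IsTNorm f) {x y : ℝ}
    (hx : x ∈ unitI) (hy : y ∈ unitI) (hxy : x ≤ y) :
    max x y = min (residuum f (residuum f x y) y) (residuum f (residuum f y x) x) := by
  rw [max_eq_right hxy, residuum_eq_one f hf hx hy hxy, residuum_one f hf hy]
  have hr := residuum_mem f hf hx hy
  set r := residuum f y x with hrdef
  have hrI : r ∈ unitI := hr.1
  have hfr : f r y ≤ x := hr.2
  have hy_mem : y ∈ {a | a ∈ unitI ∧ f a r ≤ x} := by
    refine ⟨hy, ?_⟩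
    rw [hf.comm y hy r hrI]
    exact hfr
  have hbdd : BddAbove {a | a ∈ unitI ∧ f a r ≤ x} := ⟨1, fun a ha => ha.1.2⟩
  have : y ≤ residuum f r x := le_csSup hbdd hy_mem
  rw [min_eq_left this]

theorem tnorm_join_term_definable (f : ℝ → ℝ → ℝ) (hf : IsTNorm f) :
    ∀ x ∈ unitI, ∀ y ∈ unitI,
      max x y = min (residuum f (residuum f x y) y) (residuum f (residuum f y x) x) := by
  intro x hx y hy
  rcases le_total x y with h | h
  · exact key_le f hf hx hy h
  · rw [max_comm, min_comm]
    exact key_le f hf hy hx h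
end

section
/- Let ⋆ be a continuous t-norm on [0,1] with residuum →. For every a with 0 < a < 1, the set {(x,y) ∈ [0,1]² : x → y < a} is open, and the set {(x,y) ∈ [0,1]² : x → y > a} is an Fσ set. In particular the residuum is a Borel function. -/
/-!
Since `x ↦ x ⋆ y` is continuous and monotone, `{x ∈ [0,1] : x ⋆ y ≤ z}` is a closed initial
segment, so its supremum is attained and `x ≤ y → z ↔ x ⋆ y ≤ z`. Hence `y → z < c ↔ z < c ⋆ y`,
a relatively open condition in `(y, z)`: the residuum is upper semicontinuous on `[0,1]²`.
Open strict sublevel sets, `Fσ` strict superlevel sets and Borel measurability hold for every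
upper semicontinuous function on a closed set.
-/

section UpperSemicontinuous

variable {α β : Type*} [TopologicalSpace α] {g : α → β} {s : Set α}

theorem UpperSemicontinuousOn.exists_isOpen_setOf_lt [Preorder β]
    (hg : UpperSemicontinuousOn g s) (b : β) :
    ∃ U : Set α, IsOpen U ∧ {x | x ∈ s ∧ g x < b} = U ∩ s := by
  obtain ⟨U, hU, hUs⟩ := upperSemicontinuousOn_iff_preimage_Iio.mp hg b
  exact ⟨U, hU, by rw [Set.inter_comm]; exact hUs⟩

theorem UpperSemicontinuousOn.exists_isClosed_iUnion_setOf_gt [LinearOrder β] [TopologicalSpace β]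
    [OrderTopology β] [DenselyOrdered β] [NoMaxOrder β] [FirstCountableTopology β]
    (hg : UpperSemicontinuousOn g s) (hs : IsClosed s) (b : β) :
    ∃ F : ℕ → Set α, (∀ n, IsClosed (F n)) ∧ {x | x ∈ s ∧ b < g x} = ⋃ n, F n := by
  obtain ⟨u, -, hbu, hu⟩ := exists_seq_strictAnti_tendsto b
  choose V hV hVs using fun n => upperSemicontinuousOn_iff_preimage_Ici.mp hg (u n)
  refine ⟨fun n => s ∩ V n, fun n => hs.inter (hV n), ?_⟩
  ext x
  simp only [Set.mem_ofPred_eq, Set.mem_iUnion, ← hVs, Set.mem_inter_iff, Set.mem_preimage,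
    Set.mem_Ici, exists_and_left]
  refine and_congr_right fun _ => ⟨fun hbx => ?_, fun ⟨n, hn⟩ => (hbu n).trans_le hn⟩
  exact ((hu.eventually (gt_mem_nhds hbx)).exists).imp fun _ => le_of_lt

end UpperSemicontinuous

namespace IsTNorm

variable {f : ℝ → ℝ → ℝ} (hf : IsTNorm f) {x y z : ℝ}
include hf

theorem mono_left (hx : x ∈ unitI) (hy : y ∈ unitI) (hz : z ∈ unitI) (h : x ≤ y) :
    f x z ≤ f y z := by
  rw [hf.comm x hx z hz, hf.comm y hy z hz]
  exact hf.mono x hx y hy z hz h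

theorem zero_mul (hy : y ∈ unitI) : f 0 y = 0 := by
  have h0 : (0 : ℝ) ∈ unitI := ⟨le_rfl, zero_le_one⟩
  refine le_antisymm ?_ (hf.maps 0 h0 y hy).1
  simpa only [hf.one_mul 0 h0] using hf.mono y hy 1 ⟨zero_le_one, le_rfl⟩ 0 h0 hy.2

theorem isGreatest_residuum (hy : y ∈ unitI) (hz : 0 ≤ z) :
    IsGreatest {x | x ∈ unitI ∧ f x y ≤ z} (residuum f y z) := by
  have hcont : ContinuousOn (fun x => f x y) unitI :=
    hf.cont.comp (continuous_id.prodMk continuous_const).continuousOn fun x hx => ⟨hx, hy⟩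
  have hclosed : IsClosed {x | x ∈ unitI ∧ f x y ≤ z} :=
    hcont.preimage_isClosed_of_isClosed isClosed_Icc isClosed_Iic
  have hne : {x | x ∈ unitI ∧ f x y ≤ z}.Nonempty :=
    ⟨0, ⟨le_rfl, zero_le_one⟩, (hf.zero_mul hy).trans_le hz⟩
  exact hclosed.isGreatest_csSup hne ⟨1, fun _ hx => hx.1.2⟩

theorem le_residuum_iff (hx : x ∈ unitI) (hy : y ∈ unitI) (hz : 0 ≤ z) :
    x ≤ residuum f y z ↔ f x y ≤ z := by
  obtain ⟨⟨hr, hry⟩, hmax⟩ := hf.isGreatest_residuum hy hz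
  exact ⟨fun h => (hf.mono_left hx hr hy h).trans hry, fun h => hmax ⟨hx, h⟩⟩

theorem residuum_lt_iff (hx : x ∈ unitI) (hy : y ∈ unitI) (hz : 0 ≤ z) :
    residuum f y z < x ↔ z < f x y := by
  simpa only [not_le] using (hf.le_residuum_iff hx hy hz).not

theorem upperSemicontinuousOn_residuum :
    UpperSemicontinuousOn (fun p : ℝ × ℝ => residuum f p.1 p.2) (unitI ×ˢ unitI) := by
  rintro p ⟨hp1, hp2⟩ c hc
  have hres : ∀ q ∈ unitI ×ˢ unitI, residuum f q.1 q.2 ∈ unitI :=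
    fun q hq => (hf.isGreatest_residuum hq.1 hq.2.1).1.1
  rcases le_or_gt c 1 with hc1 | hc1
  · have hcI : c ∈ unitI := ⟨(hres p ⟨hp1, hp2⟩).1.trans hc.le, hc1⟩
    have hcont : ContinuousOn (fun q : ℝ × ℝ => f c q.1 - q.2) (unitI ×ˢ unitI) :=
      (hf.cont.comp (continuous_const.prodMk continuous_fst).continuousOn
        fun q hq => ⟨hcI, hq.1⟩).sub continuousOn_snd
    have hpos : 0 < f c p.1 - p.2 := sub_pos.mpr ((hf.residuum_lt_iff hcI hp1 hp2.1).mp hc)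
    filter_upwards [(hcont p ⟨hp1, hp2⟩).eventually (lt_mem_nhds hpos),
      self_mem_nhdsWithin] with q hq hqI
    exact (hf.residuum_lt_iff hcI hqI.1 hqI.2.1).mpr (sub_pos.mp hq)
  · filter_upwards [self_mem_nhdsWithin] with q hq
    exact (hres q hq).2.trans_lt hc1

end IsTNorm

theorem residuum_borel_general (f : ℝ → ℝ → ℝ) (hf : IsTNorm f) (a : ℝ) :
    (∃ U : Set (ℝ × ℝ), IsOpen U ∧
      {p : ℝ × ℝ | p ∈ unitI ×ˢ unitI ∧ residuum f p.1 p.2 < a} = U ∩ unitI ×ˢ unitI) ∧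
    (∃ F : ℕ → Set (ℝ × ℝ), (∀ n, IsClosed (F n)) ∧
      {p : ℝ × ℝ | p ∈ unitI ×ˢ unitI ∧ a < residuum f p.1 p.2} = ⋃ n, F n) ∧
    Measurable ((unitI ×ˢ unitI).restrict (fun p : ℝ × ℝ => residuum f p.1 p.2)) := by
  have husc := hf.upperSemicontinuousOn_residuum
  exact ⟨husc.exists_isOpen_setOf_lt a,
    husc.exists_isClosed_iUnion_setOf_gt (isClosed_Icc.prod isClosed_Icc) a,
    (upperSemicontinuousOn_iff_restrict.mpr husc).measurable⟩

theorem residuum_borel (f : ℝ → ℝ → ℝ) (hf : IsTNorm f) (a : ℝ) (ha0 : 0 < a) (ha1 : a < 1) :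
    (∃ U : Set (ℝ × ℝ), IsOpen U ∧
      {p : ℝ × ℝ | p ∈ unitI ×ˢ unitI ∧ residuum f p.1 p.2 < a} = U ∩ unitI ×ˢ unitI) ∧
    (∃ F : ℕ → Set (ℝ × ℝ), (∀ n, IsClosed (F n)) ∧
      {p : ℝ × ℝ | p ∈ unitI ×ˢ unitI ∧ a < residuum f p.1 p.2} = ⋃ n, F n) ∧
    Measurable ((unitI ×ˢ unitI).restrict (fun p : ℝ × ℝ => residuum f p.1 p.2)) :=
  residuum_borel_general f hf a
end

section
/- In a commutative residuated structure (A, ⋆, →, ∧, ∨, 1) belonging to a variety generated by a totally ordered algebra (so that (x→y) ∨ (y→x) = 1 holds), if every filter is an intersection of the filters containing a single element, then for principal filters one has ⟨a⟩ ∩ ⟨b⟩ = ⟨a ∨ b⟩, where ⟨a⟩ denotes the smallest filter containing a. -/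
/-- A commutative residuated lattice-ordered structure with top element `1`,
satisfying the prelinearity law `(x → y) ∨ (y → x) = 1` (which holds in any
variety generated by a totally ordered algebra). -/
structure ResidStruct (A : Type*) [Lattice A] where
  mul : A → A → A
  one : A
  imp : A → A → A
  mul_comm : ∀ a b, mul a b = mul b a
  mul_assoc : ∀ a b c, mul (mul a b) c = mul a (mul b c)
  mul_one : ∀ a, mul a one = a
  le_one : ∀ a, a ≤ one
  mul_le_iff : ∀ a b c, mul a b ≤ c ↔ a ≤ imp b c
  prelinear : ∀ a b, imp a b ⊔ imp b a = one

variable {A : Type*} [Lattice A]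

/-- A filter: contains `1`, is upward closed, and is closed under the monoidal product. -/
def ResidStruct.IsFilter (H : ResidStruct A) (F : Set A) : Prop :=
  H.one ∈ F ∧ (∀ a ∈ F, ∀ b, a ≤ b → b ∈ F) ∧ (∀ a ∈ F, ∀ b ∈ F, H.mul a b ∈ F)

/-- The filter generated by a single element: the intersection of all filters containing it. -/
def ResidStruct.gen (H : ResidStruct A) (a : A) : Set A :=
  ⋂₀ {F : Set A | H.IsFilter F ∧ a ∈ F}

namespace ResidStruct

variable (H : ResidStruct A)

/-- powers -/
def pow (a : A) : ℕ → A
  | 0 => H.one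
  | n + 1 => H.mul a (pow a n)

lemma pow_zero (a : A) : H.pow a 0 = H.one := rfl

lemma pow_succ (a : A) (n : ℕ) : H.pow a (n + 1) = H.mul a (H.pow a n) := rfl

lemma mul_mono_left {a b : A} (c : A) (h : a ≤ b) : H.mul a c ≤ H.mul b c := by
  rw [H.mul_le_iff]
  exact le_trans h ((H.mul_le_iff b c (H.mul b c)).1 le_rfl)

lemma mul_mono_right (a : A) {b c : A} (h : b ≤ c) : H.mul a b ≤ H.mul a c := by
  rw [H.mul_comm a b, H.mul_comm a c]; exact H.mul_mono_left a h

lemma mul_le_right (a b : A) : H.mul a b ≤ b := by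
  calc H.mul a b ≤ H.mul H.one b := H.mul_mono_left b (H.le_one a)
    _ = b := by rw [H.mul_comm, H.mul_one]

lemma mul_sup (a b c : A) : H.mul (a ⊔ b) c = H.mul a c ⊔ H.mul b c := by
  apply le_antisymm
  · rw [H.mul_le_iff]
    exact sup_le ((H.mul_le_iff _ _ _).1 le_sup_left) ((H.mul_le_iff _ _ _).1 le_sup_right)
  · exact sup_le (H.mul_mono_left c le_sup_left) (H.mul_mono_left c le_sup_right)

lemma pow_le_one (a : A) (n : ℕ) : H.pow a n ≤ H.one := H.le_one _

lemma pow_add (a : A) (n m : ℕ) : H.pow a (n + m) = H.mul (H.pow a n) (H.pow a m) := by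
  induction n with
  | zero => rw [Nat.zero_add, pow_zero, H.mul_comm, H.mul_one]
  | succ k ih =>
      have h1 : k + 1 + m = (k + m) + 1 := by omega
      rw [h1, pow_succ, pow_succ, ih, ← H.mul_assoc]

lemma pow_mem {F : Set A} (hF : H.IsFilter F) {a : A} (ha : a ∈ F) (n : ℕ) :
    H.pow a n ∈ F := by
  induction n with
  | zero => exact hF.1
  | succ k ih => exact hF.2.2 a ha _ ih

/-- explicit description of the generated filter -/
lemma gen_eq (a : A) : H.gen a = {x | ∃ n, H.pow a n ≤ x} := by
  apply le_antisymm
  · intro x hx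
    apply hx
    refine ⟨⟨⟨0, le_rfl⟩, ?_, ?_⟩, ⟨1, ?_⟩⟩
    · rintro y ⟨n, hn⟩ z hyz; exact ⟨n, le_trans hn hyz⟩
    · rintro y ⟨n, hn⟩ z ⟨m, hm⟩
      exact ⟨n + m, by rw [H.pow_add]; exact le_trans (H.mul_mono_left _ hn) (H.mul_mono_right _ hm)⟩
    · show H.pow a 1 ≤ a
      rw [pow_succ, pow_zero, H.mul_one]
  · rintro x ⟨n, hn⟩ F ⟨hF, haF⟩
    exact hF.2.1 _ (H.pow_mem hF haF n) x hn

lemma key (a b : A) : ∀ k n m, n + m = k → H.pow (a ⊔ b) k ≤ H.pow a n ⊔ H.pow b m := by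
  intro k
  induction k with
  | zero =>
      intro n m h
      obtain ⟨rfl, rfl⟩ : n = 0 ∧ m = 0 := by omega
      exact le_sup_left
  | succ k ih =>
      intro n m h
      match n, m with
      | 0, m => exact le_trans (H.pow_le_one _ _) le_sup_left
      | n + 1, 0 => exact le_trans (H.pow_le_one _ _) le_sup_right
      | n + 1, m + 1 =>
          rw [pow_succ, H.mul_sup]
          apply sup_le
          · calc H.mul a (H.pow (a ⊔ b) k)
                ≤ H.mul a (H.pow a n ⊔ H.pow b (m+1)) := H.mul_mono_right _ (ih n (m+1) (by omega))
              _ = H.mul a (H.pow a n) ⊔ H.mul a (H.pow b (m+1)) := by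
                  rw [H.mul_comm, H.mul_sup, H.mul_comm _ a, H.mul_comm _ a]
              _ ≤ H.pow a (n+1) ⊔ H.pow b (m+1) :=
                  sup_le le_sup_left (le_trans (H.mul_le_right _ _) le_sup_right)
          · calc H.mul b (H.pow (a ⊔ b) k)
                ≤ H.mul b (H.pow a (n+1) ⊔ H.pow b m) := H.mul_mono_right _ (ih (n+1) m (by omega))
              _ = H.mul b (H.pow a (n+1)) ⊔ H.mul b (H.pow b m) := by
                  rw [H.mul_comm, H.mul_sup, H.mul_comm _ b, H.mul_comm _ b]
              _ ≤ H.pow a (n+1) ⊔ H.pow b (m+1) :=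
                  sup_le (le_trans (H.mul_le_right _ _) le_sup_left) le_sup_right

end ResidStruct

theorem gen_inter_gen (H : ResidStruct A) (a b : A) :
    H.gen a ∩ H.gen b = H.gen (a ⊔ b) := by
  apply le_antisymm
  · rintro x ⟨hxa, hxb⟩
    rw [H.gen_eq] at hxa hxb ⊢
    obtain ⟨n, hn⟩ := hxa
    obtain ⟨m, hm⟩ := hxb
    exact ⟨n + m, le_trans (H.key a b (n+m) n m rfl) (sup_le hn hm)⟩
  · intro x hx
    constructor
    · intro F hF
      exact hx F ⟨hF.1, hF.1.2.1 a hF.2 _ le_sup_left⟩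
    · intro F hF
      exact hx F ⟨hF.1, hF.1.2.1 b hF.2 _ le_sup_right⟩
end

section
/- Let A be an algebra in a variety V generated by a totally ordered residuated structure, so that A carries an order a ≤ b iff a → b = 1 and satisfies (a→b) ∨ (b→a) = 1. Then the following are equivalent: (i) A is totally ordered; (ii) the set of filters of A is totally ordered by inclusion; (iii) every filter of A is prime; (iv) the trivial filter {1} is prime. Moreover, these conditions are implied by subdirect irreducibility of A. -/
variable {A : Type*} [Lattice A]

/-- A prime filter: whenever it is the intersection of two filters, it equals one of them. -/
def ResidStruct.IsPrime (H : ResidStruct A) (P : Set A) : Prop :=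
  H.IsFilter P ∧ ∀ F G : Set A, H.IsFilter F → H.IsFilter G → P = F ∩ G → P = F ∨ P = G

/-- The trivial filter `⟨1⟩`. -/
def ResidStruct.trivialFilter (H : ResidStruct A) : Set A := {x | H.one ≤ x}

/-!
By prelinearity `(a → b) ⊔ (b → a) = 1`, so everything reduces to `⟨c⟩ ∩ ⟨d⟩ = {1}` whenever
`c ⊔ d = 1`: then primeness of `{1}` puts `a → b` or `b → a` into `{1}`, i.e. `a ≤ b` or `b ≤ a`.
The key observation is that for fixed `x` the elements `y` with `y ⊔ x = 1` form a filter
(expand `1 = (y ⊔ x)(z ⊔ x)`). If `x ∈ ⟨c⟩ ∩ ⟨d⟩`, the filter for `d` contains `c`, hence `x`;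
so the filter for `x` contains `d`, hence `x`, and `x = x ⊔ x = 1`.
-/

namespace ResidStruct

variable (H : ResidStruct A)

lemma le_iff_one_le_imp (a b : A) : a ≤ b ↔ H.one ≤ H.imp a b := by
  rw [← H.mul_le_iff, H.mul_comm, H.mul_one]

lemma mul_le_mul_right {a b : A} (h : a ≤ b) (c : A) : H.mul a c ≤ H.mul b c :=
  (H.mul_le_iff a c _).mpr (h.trans ((H.mul_le_iff b c _).mp le_rfl))

lemma mul_le_left (a b : A) : H.mul a b ≤ a := by
  simpa only [H.mul_comm _ a, H.mul_one] using H.mul_le_mul_right (H.le_one b) a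

lemma sup_mul_le_iff (a b c t : A) :
    H.mul (a ⊔ b) c ≤ t ↔ H.mul a c ≤ t ∧ H.mul b c ≤ t := by
  simp only [H.mul_le_iff, sup_le_iff]

lemma mul_sup_le_iff (a b c t : A) :
    H.mul a (b ⊔ c) ≤ t ↔ H.mul a b ≤ t ∧ H.mul a c ≤ t := by
  simp only [H.mul_comm a, H.sup_mul_le_iff]

lemma mul_sup_eq_one {x y z : A} (hy : y ⊔ x = H.one) (hz : z ⊔ x = H.one) :
    H.mul y z ⊔ x = H.one := by
  refine le_antisymm (H.le_one _) ?_
  calc H.one = H.mul (y ⊔ x) (z ⊔ x) := by rw [hy, hz, H.mul_one]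
    _ ≤ H.mul y z ⊔ x := by
      simp only [H.sup_mul_le_iff, H.mul_sup_le_iff]
      exact ⟨⟨le_sup_left, le_sup_of_le_right (H.mul_le_right y x)⟩,
        le_sup_of_le_right (H.mul_le_left x z), le_sup_of_le_right (H.mul_le_left x x)⟩

def comaximal (x : A) : Set A := {y | y ⊔ x = H.one}

lemma isFilter_comaximal (x : A) : H.IsFilter (H.comaximal x) :=
  ⟨sup_eq_left.mpr (H.le_one x),
    fun _ ha _ hab => le_antisymm (H.le_one _) (ha ▸ sup_le_sup_right hab x),
    fun _ ha _ hb => H.mul_sup_eq_one ha hb⟩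

lemma mem_trivialFilter_iff (x : A) : x ∈ H.trivialFilter ↔ x = H.one :=
  ⟨fun h => le_antisymm (H.le_one x) h, fun h => h.ge⟩

lemma isFilter_trivialFilter : H.IsFilter H.trivialFilter := by
  refine ⟨le_rfl, fun a ha b hab => le_trans ha hab, fun a ha b hb => ?_⟩
  rw [H.mem_trivialFilter_iff] at ha hb ⊢
  rw [ha, hb, H.mul_one]

lemma trivialFilter_subset {F : Set A} (hF : H.IsFilter F) : H.trivialFilter ⊆ F :=
  fun x hx => hF.2.1 H.one hF.1 x hx

lemma isFilter_gen (c : A) : H.IsFilter (H.gen c) :=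
  ⟨fun _ hF => hF.1.1, fun a ha b hab F hF => hF.1.2.1 a (ha F hF) b hab,
    fun a ha b hb F hF => hF.1.2.2 a (ha F hF) b (hb F hF)⟩

lemma mem_gen_self (c : A) : c ∈ H.gen c := fun _ hF => hF.2

lemma gen_subset {c : A} {F : Set A} (hF : H.IsFilter F) (hc : c ∈ F) : H.gen c ⊆ F :=
  Set.sInter_subset_of_mem ⟨hF, hc⟩

lemma gen_inter_gen_eq_trivialFilter {c d : A} (h : c ⊔ d = H.one) :
    H.gen c ∩ H.gen d = H.trivialFilter := by
  refine le_antisymm (fun x ⟨hxc, hxd⟩ => ?_)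
    (Set.subset_inter (H.trivialFilter_subset (H.isFilter_gen c))
      (H.trivialFilter_subset (H.isFilter_gen d)))
  have hxd' : d ⊔ x = H.one :=
    sup_comm x d ▸ H.gen_subset (H.isFilter_comaximal d) h hxc
  have hxx : x ⊔ x = H.one := H.gen_subset (H.isFilter_comaximal x) hxd' hxd
  rw [H.mem_trivialFilter_iff, ← hxx, sup_idem]

lemma filters_chain_of_total (htot : ∀ a b : A, a ≤ b ∨ b ≤ a) {F G : Set A}
    (hF : H.IsFilter F) (hG : H.IsFilter G) : F ⊆ G ∨ G ⊆ F := by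
  refine or_iff_not_imp_left.mpr fun hFG => ?_
  obtain ⟨a, haF, haG⟩ := Set.not_subset.mp hFG
  intro b hbG
  rcases htot a b with hab | hba
  · exact hF.2.1 a haF b hab
  · exact absurd (hG.2.1 b hbG a hba) haG

lemma isPrime_of_filters_chain
    (hch : ∀ F G : Set A, H.IsFilter F → H.IsFilter G → F ⊆ G ∨ G ⊆ F)
    {P : Set A} (hP : H.IsFilter P) : H.IsPrime P := by
  refine ⟨hP, fun F G hF hG hPFG => ?_⟩
  rcases hch F G hF hG with h | h
  · exact Or.inl (by rw [hPFG, Set.inter_eq_left.mpr h])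
  · exact Or.inr (by rw [hPFG, Set.inter_eq_right.mpr h])

lemma total_of_isPrime_trivialFilter (hp : H.IsPrime H.trivialFilter) (a b : A) :
    a ≤ b ∨ b ≤ a := by
  rw [H.le_iff_one_le_imp a, H.le_iff_one_le_imp b]
  rcases hp.2 _ _ (H.isFilter_gen _) (H.isFilter_gen _)
      (H.gen_inter_gen_eq_trivialFilter (H.prelinear a b)).symm with h | h
  · exact Or.inl (show H.imp a b ∈ H.trivialFilter from h ▸ H.mem_gen_self _)
  · exact Or.inr (show H.imp b a ∈ H.trivialFilter from h ▸ H.mem_gen_self _)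

lemma isPrime_trivialFilter_of_least_nontrivial {F₀ : Set A}
    (hF₀ : H.IsFilter F₀) (hne : F₀ ≠ H.trivialFilter)
    (hleast : ∀ G : Set A, H.IsFilter G → G ≠ H.trivialFilter → F₀ ⊆ G) :
    H.IsPrime H.trivialFilter := by
  refine ⟨H.isFilter_trivialFilter, fun F G hF hG hFG => ?_⟩
  by_contra! hcon
  have hF₀_sub : F₀ ⊆ H.trivialFilter :=
    hFG ▸ Set.subset_inter (hleast F hF (Ne.symm hcon.1)) (hleast G hG (Ne.symm hcon.2))
  exact hne (le_antisymm hF₀_sub (H.trivialFilter_subset hF₀))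

end ResidStruct

theorem totallyOrdered_tfae (H : ResidStruct A) :
    ((∀ a b : A, a ≤ b ∨ b ≤ a) ↔
      (∀ F G : Set A, H.IsFilter F → H.IsFilter G → F ⊆ G ∨ G ⊆ F)) ∧
    ((∀ a b : A, a ≤ b ∨ b ≤ a) ↔
      (∀ F : Set A, H.IsFilter F → H.IsPrime F)) ∧
    ((∀ a b : A, a ≤ b ∨ b ≤ a) ↔ H.IsPrime H.trivialFilter) ∧
    ((∃ F₀ : Set A, (H.IsFilter F₀ ∧ F₀ ≠ H.trivialFilter) ∧
        ∀ G : Set A, H.IsFilter G → G ≠ H.trivialFilter → F₀ ⊆ G) →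
      ∀ a b : A, a ≤ b ∨ b ≤ a) := by
  have i_ii := fun htot F G (hF : H.IsFilter F) (hG : H.IsFilter G) =>
    H.filters_chain_of_total htot hF hG
  have ii_iii := fun hch P (hP : H.IsFilter P) => H.isPrime_of_filters_chain hch hP
  have iii_iv := fun (h : ∀ F : Set A, H.IsFilter F → H.IsPrime F) =>
    h _ H.isFilter_trivialFilter
  have iv_i := H.total_of_isPrime_trivialFilter
  refine ⟨⟨i_ii, fun h => iv_i (iii_iv (ii_iii h))⟩,
    ⟨fun h => ii_iii (i_ii h), fun h => iv_i (iii_iv h)⟩,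
    ⟨fun h => iii_iv (ii_iii (i_ii h)), iv_i⟩, ?_⟩
  rintro ⟨F₀, ⟨hF₀, hne⟩, hleast⟩
  exact iv_i (H.isPrime_trivialFilter_of_least_nontrivial hF₀ hne hleast)
end

section
/- Define s̄ : (0,1]² → (0,1]² by s̄(α,β) = ((α∧β)/(α∨β), α∨β), where ∧, ∨ denote min and max. Then for every p = (α,β) on the hyperbola x₀x₁ = c (i.e., αβ = c), the image s̄(p) lies on a hyperbola x₀x₁ = d with d ≥ c; hence the forward orbit of p under s̄ stays in the region {x₀x₁ ≥ c}, and in particular no point (α,β) with αβ > 0 has a dense s̄-orbit in (0,1]². -/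
/-- The map `s̄(α,β) = ((α∧β)/(α∨β), α∨β)` on `(0,1]²`. -/
noncomputable def sbar (p : ℝ × ℝ) : ℝ × ℝ :=
  (min p.1 p.2 / max p.1 p.2, max p.1 p.2)

lemma sbar_mem {p : ℝ × ℝ} (hp : p ∈ Set.Ioc (0:ℝ) 1 ×ˢ Set.Ioc (0:ℝ) 1) :
    sbar p ∈ Set.Ioc (0:ℝ) 1 ×ˢ Set.Ioc (0:ℝ) 1 := by
  obtain ⟨⟨h1, h1'⟩, ⟨h2, h2'⟩⟩ := hp
  have hmin : 0 < min p.1 p.2 := lt_min h1 h2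
  have hmax : 0 < max p.1 p.2 := lt_of_lt_of_le hmin (min_le_max)
  constructor
  · exact ⟨div_pos hmin hmax, div_le_one_of_le₀ (min_le_max) hmax.le⟩
  · exact ⟨hmax, max_le h1' h2'⟩

lemma sbar_prod {p : ℝ × ℝ} (hp : p ∈ Set.Ioc (0:ℝ) 1 ×ˢ Set.Ioc (0:ℝ) 1) :
    p.1 * p.2 ≤ (sbar p).1 * (sbar p).2 := by
  obtain ⟨⟨h1, h1'⟩, ⟨h2, h2'⟩⟩ := hp
  have hmax : 0 < max p.1 p.2 := lt_of_lt_of_le h1 (le_max_left _ _)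
  have : (sbar p).1 * (sbar p).2 = min p.1 p.2 := by
    simp [sbar, div_mul_cancel₀, hmax.ne']
  rw [this]
  rcases le_total p.1 p.2 with h | h
  · rw [min_eq_left h]
    calc p.1 * p.2 ≤ p.1 * 1 := by nlinarith
    _ = p.1 := mul_one _
  · rw [min_eq_right h]
    calc p.1 * p.2 ≤ 1 * p.2 := by nlinarith
    _ = p.2 := one_mul _

lemma sbar_iter {p : ℝ × ℝ} (hp : p ∈ Set.Ioc (0:ℝ) 1 ×ˢ Set.Ioc (0:ℝ) 1) (n : ℕ) :
    sbar^[n] p ∈ Set.Ioc (0:ℝ) 1 ×ˢ Set.Ioc (0:ℝ) 1 ∧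
      p.1 * p.2 ≤ (sbar^[n] p).1 * (sbar^[n] p).2 := by
  induction n with
  | zero => exact ⟨hp, le_refl _⟩
  | succ n ih =>
    rw [Function.iterate_succ_apply']
    exact ⟨sbar_mem ih.1, ih.2.trans (sbar_prod ih.1)⟩

theorem sbar_no_dense_orbit :
    -- the product of the coordinates does not decrease under s̄
    (∀ p ∈ Set.Ioc (0:ℝ) 1 ×ˢ Set.Ioc (0:ℝ) 1, p.1 * p.2 ≤ (sbar p).1 * (sbar p).2) ∧
    -- hence the forward orbit stays in the region {x₀x₁ ≥ c}, c = p.1 * p.2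
    (∀ p ∈ Set.Ioc (0:ℝ) 1 ×ˢ Set.Ioc (0:ℝ) 1, ∀ n : ℕ,
      p.1 * p.2 ≤ (sbar^[n] p).1 * (sbar^[n] p).2) ∧
    -- and no point of (0,1]² has a dense orbit in (0,1]²
    (∀ p ∈ Set.Ioc (0:ℝ) 1 ×ˢ Set.Ioc (0:ℝ) 1,
      ¬ (Set.Ioc (0:ℝ) 1 ×ˢ Set.Ioc (0:ℝ) 1 ⊆
          closure (Set.range fun n : ℕ => sbar^[n] p))) := by
  refine ⟨fun p hp => sbar_prod hp, fun p hp n => (sbar_iter hp n).2, fun p hp hsub => ?_⟩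
  set c := p.1 * p.2 with hc
  have hc0 : 0 < c := mul_pos hp.1.1 hp.2.1
  have hc1 : c ≤ 1 := mul_le_one₀ hp.1.2 hp.2.1.le hp.2.2
  -- the closed set {x | c ≤ x.1 * x.2} contains the orbit
  have hclosed : IsClosed {x : ℝ × ℝ | c ≤ x.1 * x.2} :=
    isClosed_le continuous_const (continuous_fst.mul continuous_snd)
  have hrange : Set.range (fun n : ℕ => sbar^[n] p) ⊆ {x : ℝ × ℝ | c ≤ x.1 * x.2} := by
    rintro _ ⟨n, rfl⟩
    exact (sbar_iter hp n).2
  have hclos : closure (Set.range fun n : ℕ => sbar^[n] p) ⊆ {x : ℝ × ℝ | c ≤ x.1 * x.2} :=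
    closure_minimal hrange hclosed
  have hq : ((c/2, c/2) : ℝ × ℝ) ∈ Set.Ioc (0:ℝ) 1 ×ˢ Set.Ioc (0:ℝ) 1 := by
    constructor <;> constructor <;> simp <;> linarith
  have := hclos (hsub hq)
  simp only [Set.mem_setOf_eq] at this
  nlinarith
end
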